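/- Let X = ℓ²(ℕ, ℂ) viewed as the Hilbert space direct sum of ℂⁱ, i = 1, 2, …, and let A act blockwise by A_i = −I_i + N_i where N_i ∈ ℂ^{i×i} is the standard nilpotent shift (ones on the superdiagonal, zeros elsewhere). Then A is a bounded linear operator on X with ‖A‖ ≤ 2, and its spectrum is σ(A) = closure of the ball of radius 1 centered at −1 in ℂ. -/

import Mathlib

/-- The nilpotent shift matrix `N_i` (ones on the superdiagonal). -/
noncomputable def Nmat (n : ℕ) : Matrix (Fin (n+1)) (Fin (n+1)) ℂ :=
  Matrix.of fun j k => if (j : ℕ) + 1 = (k : ℕ) then 1 else 0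

/-- The block `A_i = -I_i + N_i`. -/
noncomputable def Amat (n : ℕ) : Matrix (Fin (n+1)) (Fin (n+1)) ℂ := -1 + Nmat n

/-- The Hilbert space `X = ⨁_{i≥1} ℂⁱ` (ℓ²-direct sum). -/
noncomputable abbrev Xsp : Type := lp (fun i : ℕ => EuclideanSpace ℂ (Fin (i+1))) 2

/-!
`A = N - 1`, where `N` acts on the `i`-th block by the shift `N_i`, of norm at most `1`; hence
`‖A‖ ≤ 2` and `σ(A) = σ(N) - 1`, with `σ(N)` inside the closed unit disc. Conversely, for
`|μ| < 1` the geometric vector `w = (1, μ, …, μ^i)` of the `i`-th block has `‖w‖ ≥ 1` and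
`(μ - N_i) w = μ^(i+1) e_i`, so `μ - N` is not bounded below and `μ ∈ σ(N)`. The spectrum is
closed, so it contains the whole closed disc.
-/

open Filter Topology Metric
open scoped ENNReal NNReal Matrix

section BlockDiagonal

variable {𝕜 ι : Type*} [NontriviallyNormedField 𝕜] {E F : ι → Type*}
  [∀ i, NormedAddCommGroup (E i)] [∀ i, NormedSpace 𝕜 (E i)]
  [∀ i, NormedAddCommGroup (F i)] [∀ i, NormedSpace 𝕜 (F i)]
  {p : ℝ≥0∞}

theorem lp.norm_le_mul_norm_of_forall_le (hp : p ≠ 0) {x : lp E p} {y : lp F p} {C : ℝ}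
    (hC : 0 ≤ C) (h : ∀ i, ‖y i‖ ≤ C * ‖x i‖) : ‖y‖ ≤ C * ‖x‖ := by
  let z : lp (fun _ : ι => ℝ) p := ⟨fun i => ‖x i‖, (lp.memℓp x).norm⟩
  have hz : ‖z‖ = ‖x‖ :=
    le_antisymm (lp.norm_mono hp fun i => by simp [z]) (lp.norm_mono hp fun i => by simp [z])
  calc ‖y‖ ≤ ‖C • z‖ := lp.norm_mono hp fun i => by simpa [z, abs_of_nonneg hC] using h i
    _ = C * ‖x‖ := by rw [lp.norm_const_smul hp, hz, Real.norm_of_nonneg hC]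

variable [Fact (1 ≤ p)]

noncomputable def lp.blockDiagonal (f : ∀ i, E i →L[𝕜] F i) (C : ℝ≥0) (hf : ∀ i, ‖f i‖ ≤ C) :
    lp E p →L[𝕜] lp F p :=
  LinearMap.mkContinuous
    { toFun x := ⟨fun i => f i (x i),
        ((lp.memℓp x).norm.const_smul (C : ℝ)).mono fun i => (f i).le_of_opNorm_le (hf i) (x i)⟩
      map_add' x y := by ext i; exact map_add (f i) _ _
      map_smul' c x := by ext i; exact map_smul (f i) _ _ }
    C fun x => lp.norm_le_mul_norm_of_forall_le (zero_lt_one.trans_le Fact.out).ne' C.2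
      fun i => (f i).le_of_opNorm_le (hf i) (x i)

variable (f : ∀ i, E i →L[𝕜] F i) (C : ℝ≥0) (hf : ∀ i, ‖f i‖ ≤ C)

theorem lp.blockDiagonal_apply (x : lp E p) (i : ι) : lp.blockDiagonal f C hf x i = f i (x i) :=
  rfl

theorem lp.norm_blockDiagonal_le : ‖(lp.blockDiagonal f C hf : lp E p →L[𝕜] lp F p)‖ ≤ C :=
  LinearMap.mkContinuous_norm_le _ C.2 _

theorem lp.blockDiagonal_single [DecidableEq ι] (i : ι) (v : E i) :
    lp.blockDiagonal f C hf (lp.single p i v) = lp.single p i (f i v) := by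
  ext j
  obtain rfl | hj := eq_or_ne j i
  · simp [lp.blockDiagonal_apply]
  · simp [lp.blockDiagonal_apply, Pi.single_eq_of_ne hj]

end BlockDiagonal

theorem not_isUnit_of_tendsto_zero {𝕜 E : Type*} [NontriviallyNormedField 𝕜]
    [NormedAddCommGroup E] [NormedSpace 𝕜 E] {T : E →L[𝕜] E} {x : ℕ → E}
    (hx : ∀ n, 1 ≤ ‖x n‖) (hT : Tendsto (fun n => T (x n)) atTop (𝓝 0)) : ¬IsUnit T := by
  rintro ⟨u, rfl⟩
  have hx0 : Tendsto x atTop (𝓝 0) := by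
    have hinv n : (↑u⁻¹ : E →L[𝕜] E) ((u : E →L[𝕜] E) (x n)) = x n := by
      change (↑u⁻¹ * ↑u : E →L[𝕜] E) (x n) = x n
      rw [u.inv_mul]
      rfl
    simpa [Function.comp_def, hinv] using ((↑u⁻¹ : E →L[𝕜] E).continuous.tendsto 0).comp hT
  obtain ⟨n, hn⟩ := (hx0.norm.eventually (gt_mem_nhds (norm_zero (E := E) ▸ one_pos))).exists
  exact (hx n).not_gt hn

theorem Nmat_mulVec_castSucc (n : ℕ) (v : Fin (n+1) → ℂ) (j : Fin n) :
    (Nmat n *ᵥ v) j.castSucc = v j.succ := by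
  rw [Matrix.mulVec, dotProduct, Finset.sum_eq_single j.succ]
  · simp [Nmat]
  · intro k _ hk
    have : (j : ℕ) + 1 ≠ k := fun h => hk (Fin.ext h.symm)
    simp [Nmat, this]
  · simp

theorem Nmat_mulVec_last (n : ℕ) (v : Fin (n+1) → ℂ) : (Nmat n *ᵥ v) (Fin.last n) = 0 := by
  rw [Matrix.mulVec, dotProduct]
  refine Finset.sum_eq_zero fun k _ => ?_
  have : n + 1 ≠ (k : ℕ) := by omega
  simp [Nmat, this]

theorem Nmat_mulVec_geom (n : ℕ) (μ : ℂ) :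
    Nmat n *ᵥ (fun j : Fin (n+1) => μ ^ (j : ℕ)) =
      μ • (fun j : Fin (n+1) => μ ^ (j : ℕ)) - Pi.single (Fin.last n) (μ ^ (n + 1)) := by
  funext j
  induction j using Fin.lastCases with
  | last => simp [Nmat_mulVec_last, pow_succ']
  | cast j => simp [Nmat_mulVec_castSucc, pow_succ', (Fin.castSucc_lt_last j).ne]

theorem norm_toEuclideanCLM_Nmat_le (n : ℕ) : ‖Matrix.toEuclideanCLM (𝕜 := ℂ) (Nmat n)‖ ≤ 1 := by
  refine ContinuousLinearMap.opNorm_le_bound _ zero_le_one fun v => ?_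
  rw [one_mul, EuclideanSpace.norm_eq, EuclideanSpace.norm_eq]
  refine Real.sqrt_le_sqrt ?_
  rw [Fin.sum_univ_castSucc, Fin.sum_univ_succ]
  simp [Nmat_mulVec_castSucc, Nmat_mulVec_last]

noncomputable def Nop : Xsp →L[ℂ] Xsp :=
  lp.blockDiagonal (fun i => Matrix.toEuclideanCLM (𝕜 := ℂ) (Nmat i)) 1 norm_toEuclideanCLM_Nmat_le

theorem norm_Nop_le : ‖Nop‖ ≤ 1 :=
  lp.norm_blockDiagonal_le _ _ _

theorem Nop_single (n : ℕ) (v : EuclideanSpace ℂ (Fin (n+1))) :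
    Nop (lp.single 2 n v) = lp.single 2 n (Matrix.toEuclideanCLM (𝕜 := ℂ) (Nmat n) v) :=
  lp.blockDiagonal_single (E := fun i : ℕ => EuclideanSpace ℂ (Fin (i+1)))
    (F := fun i : ℕ => EuclideanSpace ℂ (Fin (i+1))) _ _ _ n v

theorem Nop_sub_one_apply (x : Xsp) (i : ℕ) :
    (Nop - 1) x i = Matrix.toEuclideanLin (Amat i) (x i) := by
  change Matrix.toEuclideanCLM (𝕜 := ℂ) (Nmat i) (x i) - x i = _
  simp [Amat, ← Matrix.coe_toEuclideanCLM_eq_toEuclideanLin, sub_eq_neg_add]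

theorem ball_subset_spectrum_Nop : ball (0 : ℂ) 1 ⊆ spectrum ℂ Nop := by
  intro μ hμ
  rw [mem_ball_zero_iff] at hμ
  let w n : EuclideanSpace ℂ (Fin (n+1)) := WithLp.toLp 2 fun j => μ ^ (j : ℕ)
  have hw n : 1 ≤ ‖(lp.single 2 n (w n) : Xsp)‖ := by
    rw [lp.norm_single (by norm_num)]
    simpa [w] using PiLp.norm_apply_le (w n) 0
  have hNw n : μ • w n - Matrix.toEuclideanCLM (𝕜 := ℂ) (Nmat n) (w n)
      = EuclideanSpace.single (Fin.last n) (μ ^ (n + 1)) := by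
    ext j
    simp [w, Nmat_mulVec_geom]
  have hnorm n : ‖(lp.single 2 n (EuclideanSpace.single (Fin.last n) (μ ^ (n + 1))) : Xsp)‖
      = ‖μ‖ ^ (n + 1) := by
    rw [lp.norm_single (by norm_num), PiLp.norm_single, norm_pow]
  refine spectrum.mem_iff.2 <| not_isUnit_of_tendsto_zero hw ?_
  rw [tendsto_zero_iff_norm_tendsto_zero]
  simp only [Algebra.algebraMap_eq_smul_one, sub_apply, smul_apply, one_apply_eq_self,
    Nop_single, ← lp.single_smul, ← lp.single_sub, hNw, hnorm]
  exact (tendsto_pow_atTop_nhds_zero_of_lt_one (norm_nonneg μ) hμ).comp (tendsto_add_atTop_nat 1)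

theorem spectrum_Nop : spectrum ℂ Nop = closedBall 0 1 := by
  refine subset_antisymm ?_ ?_
  · exact (spectrum.subset_closedBall_norm_mul Nop).trans <| closedBall_subset_closedBall <|
      mul_le_one₀ norm_Nop_le (norm_nonneg _) ContinuousLinearMap.norm_id_le
  · rw [← closure_ball 0 one_ne_zero]
    exact closure_minimal ball_subset_spectrum_Nop (spectrum.isClosed Nop)

/-- The blockwise operator `A` with blocks `A_i = -I_i + N_i` is a bounded
operator on `X = ℓ²(⨁ ℂⁱ)` with `‖A‖ ≤ 2` and spectrum the closed unit ball
centered at `-1`. -/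
theorem blockwise_operator_bounded_and_spectrum :
    ∃ A : Xsp →L[ℂ] Xsp,
      (∀ (x : Xsp) (i : ℕ), A x i = Matrix.toEuclideanLin (Amat i) (x i)) ∧
      ‖A‖ ≤ 2 ∧
      spectrum ℂ A = Metric.closedBall (-1 : ℂ) 1 := by
  refine ⟨Nop - 1, Nop_sub_one_apply, ?_, ?_⟩
  · calc ‖Nop - 1‖ ≤ ‖Nop‖ + ‖(1 : Xsp →L[ℂ] Xsp)‖ := norm_sub_le _ _
      _ ≤ 1 + 1 := add_le_add norm_Nop_le ContinuousLinearMap.norm_id_le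
      _ = 2 := one_add_one_eq_two
  · rw [← map_one (algebraMap ℂ (Xsp →L[ℂ] Xsp)), ← spectrum.sub_singleton_eq, spectrum_Nop,
      closedBall_sub_singleton, zero_sub]
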